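/- For every odd integer n ≥ 1, real a ≥ 1, and x ∈ (0, π): ∑_{j odd, 1 ≤ j ≤ n} C(n + a − j, n − j) sin(jx) ≥ sin(x), with equality if and only if n = 1. -/

import Mathlib

open Real Finset

/-- Generalized binomial coefficient `(a + k choose k) = ∏_{ν=1}^{k} (a+ν)/ν`. -/
noncomputable def gbinom (a : ℝ) (k : ℕ) : ℝ := ∏ ν ∈ Finset.Icc 1 k, (a + ν) / ν

/-- `S n a x = ∑_{j=1}^n C(n+a−j, n−j) sin(jx)`. -/
noncomputable def S (n : ℕ) (a : ℝ) (x : ℝ) : ℝ :=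
  ∑ j ∈ Finset.Icc 1 n, gbinom a (n - j) * Real.sin (j * x)

/-- `Sstar n a x`: the sum restricted to odd indices `j`. -/
noncomputable def Sstar (n : ℕ) (a : ℝ) (x : ℝ) : ℝ :=
  ∑ j ∈ (Finset.Icc 1 n).filter (fun j => Odd j), gbinom a (n - j) * Real.sin (j * x)

lemma gbinom_zero (a : ℝ) : gbinom a 0 = 1 := by simp [gbinom]

lemma gbinom_succ (a : ℝ) (k : ℕ) :
    gbinom a (k + 1) = gbinom a k * ((a + (k + 1)) / (k + 1)) := by
  rw [gbinom, gbinom, Finset.prod_Icc_succ_top (by omega)]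
  push_cast; ring

lemma gbinom_ge (a : ℝ) (ha : 1 ≤ a) (k : ℕ) : (k : ℝ) + 1 ≤ gbinom a k := by
  induction k with
  | zero => simp [gbinom_zero]
  | succ k ih =>
    rw [gbinom_succ]
    have hk : (0:ℝ) < (k:ℝ) + 1 := by positivity
    push_cast
    rw [show gbinom a k * ((a + ((k:ℝ) + 1)) / ((k:ℝ) + 1))
        = gbinom a k * (a + ((k:ℝ) + 1)) / ((k:ℝ) + 1) from by ring, le_div_iff₀ hk]
    nlinarith

lemma gbinom_succ_ge (a : ℝ) (ha : 1 ≤ a) (k : ℕ) :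
    gbinom a k + 1 ≤ gbinom a (k + 1) := by
  rw [gbinom_succ]
  have hk : (0:ℝ) < (k:ℝ) + 1 := by positivity
  have hg := gbinom_ge a ha k
  rw [← sub_nonneg]
  have h : gbinom a k * ((a + (k + 1)) / (k + 1)) - (gbinom a k + 1)
      = (gbinom a k * a - ((k:ℝ) + 1)) / ((k:ℝ) + 1) := by
    field_simp; ring
  push_cast
  rw [h]
  apply div_nonneg _ hk.le
  nlinarith

lemma gbinom_mono (a : ℝ) (ha : 1 ≤ a) : Monotone (gbinom a) := by
  apply monotone_nat_of_le_succ
  intro k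
  have := gbinom_succ_ge a ha k
  linarith

lemma gbinom_gap (a : ℝ) (ha : 1 ≤ a) (k : ℕ) :
    gbinom a k + 2 ≤ gbinom a (k + 2) := by
  have h1 := gbinom_succ_ge a ha k
  have h2 := gbinom_succ_ge a ha (k + 1)
  linarith

/-- Abel summation. -/
lemma abel_sum (e q : ℕ → ℝ) (m : ℕ) :
    ∑ k ∈ Finset.range m, e k * q k
      = ∑ k ∈ Finset.range m, (e k - e (k + 1)) * (∑ i ∈ Finset.range (k + 1), q i)
        + e m * (∑ i ∈ Finset.range m, q i) := by
  induction m with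
  | zero => simp
  | succ m ih =>
    rw [Finset.sum_range_succ (fun k => e k * q k), ih,
      Finset.sum_range_succ (fun k => (e k - e (k + 1)) * (∑ i ∈ Finset.range (k + 1), q i)),
      Finset.sum_range_succ q]
    ring

lemma pval (x : ℝ) (m : ℕ) :
    (∑ i ∈ Finset.range m, Real.sin ((2 * (i : ℝ) + 1) * x)) * Real.sin x
      = Real.sin ((m : ℝ) * x) ^ 2 := by
  induction m with
  | zero => simp
  | succ m ih =>
    rw [Finset.sum_range_succ, add_mul, ih]
    push_cast
    have h1 : ((m : ℝ) + 1) * x = (m : ℝ) * x + x := by ring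
    have h2 : (2 * (m : ℝ) + 1) * x = ((m : ℝ) * x + x) + (m : ℝ) * x := by ring
    rw [h1, h2, Real.sin_add ((m : ℝ) * x + x) ((m:ℝ)*x), Real.sin_add, Real.cos_add]
    have p1 := Real.sin_sq_add_cos_sq x
    nlinarith [Real.sin_sq_add_cos_sq ((m:ℝ)*x)]

lemma pval_nonneg (x : ℝ) (hs : 0 < Real.sin x) (m : ℕ) :
    0 ≤ ∑ i ∈ Finset.range m, Real.sin ((2 * (i : ℝ) + 1) * x) := by
  have := pval x m
  nlinarith [sq_nonneg (Real.sin ((m : ℝ) * x))]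

lemma sstar_eq (m : ℕ) (a : ℝ) (x : ℝ) :
    Sstar (2 * m + 1) a x
      = ∑ k ∈ Finset.range (m + 1), gbinom a (2 * (m - k)) * Real.sin ((2 * (k : ℝ) + 1) * x) := by
  rw [Sstar]
  have himg : (Finset.Icc 1 (2 * m + 1)).filter (fun j => Odd j)
      = (Finset.range (m + 1)).image (fun k => 2 * k + 1) := by
    ext j
    simp only [Finset.mem_filter, Finset.mem_Icc, Finset.mem_image, Finset.mem_range,
      Nat.odd_iff]
    constructor
    · rintro ⟨⟨h1, h2⟩, h3⟩
      exact ⟨j / 2, by omega, by omega⟩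
    · rintro ⟨k, hk, rfl⟩
      omega
  rw [himg, Finset.sum_image (by intro a _ b _ h; simp only at h; omega)]
  apply Finset.sum_congr rfl
  intro k hk
  simp only [Finset.mem_range] at hk
  have h1 : 2 * m + 1 - (2 * k + 1) = 2 * (m - k) := by omega
  rw [h1]
  congr 1
  push_cast
  ring

theorem stmt_10 (n : ℕ) (hn : 1 ≤ n) (hodd : Odd n) (a : ℝ) (ha : 1 ≤ a)
    (x : ℝ) (hx : x ∈ Set.Ioo 0 Real.pi) :
    Real.sin x ≤ Sstar n a x ∧ (Sstar n a x = Real.sin x ↔ n = 1) := by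
  obtain ⟨m, rfl⟩ : ∃ m, n = 2 * m + 1 := by
    obtain ⟨t, ht⟩ := hodd; exact ⟨t, by omega⟩
  obtain ⟨hx0, hxpi⟩ := hx
  have hs : 0 < Real.sin x := Real.sin_pos_of_pos_of_lt_pi hx0 hxpi
  have hS := sstar_eq m a x
  rcases Nat.eq_zero_or_pos m with rfl | hm
  · have h1 : Sstar (2 * 0 + 1) a x = Real.sin x := by
      rw [hS]; simp [gbinom_zero]
    exact ⟨le_of_eq h1.symm, by simp [h1]⟩
  · -- n ≥ 3 : strict inequality Sstar ≥ 2 sin x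
    set e : ℕ → ℝ := fun k => gbinom a (2 * (m - k)) with he
    set q : ℕ → ℝ := fun k => Real.sin ((2 * (k : ℝ) + 1) * x) with hq
    have habel := abel_sum e q (m + 1)
    have hSe : Sstar (2 * m + 1) a x
        = ∑ k ∈ Finset.range (m + 1), (e k - e (k + 1)) * (∑ i ∈ Finset.range (k + 1), q i)
          + e (m + 1) * (∑ i ∈ Finset.range (m + 1), q i) := by
      rw [hS, ← habel]
    have hlast : e (m + 1) = 1 := by
      simp only [he]
      have : m - (m + 1) = 0 := by omega
      rw [this]; simpa using gbinom_zero a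
    -- each difference is nonneg
    have hdiff : ∀ k, 0 ≤ e k - e (k + 1) := by
      intro k
      simp only [he, sub_nonneg]
      exact gbinom_mono a ha (by omega)
    have hP : ∀ t, 0 ≤ ∑ i ∈ Finset.range t, q i := fun t => pval_nonneg x hs t
    -- the k = 0 term gives the gap
    have h0 : 2 * Real.sin x ≤ (e 0 - e 1) * (∑ i ∈ Finset.range 1, q i) := by
      have hq1 : ∑ i ∈ Finset.range 1, q i = Real.sin x := by
        simp [hq]
      rw [hq1]
      have hgap : 2 ≤ e 0 - e 1 := by
        simp only [he]
        have h1 : 2 * (m - 0) = 2 * (m - 1) + 2 := by omega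
        rw [h1]
        have := gbinom_gap a ha (2 * (m - 1))
        linarith
      nlinarith
    have hrest : 0 ≤ ∑ k ∈ Finset.Ico 1 (m + 1),
        (e k - e (k + 1)) * (∑ i ∈ Finset.range (k + 1), q i) := by
      apply Finset.sum_nonneg
      intro k _
      exact mul_nonneg (hdiff k) (hP (k + 1))
    have hsplit : ∑ k ∈ Finset.range (m + 1), (e k - e (k + 1)) * (∑ i ∈ Finset.range (k + 1), q i)
        = (e 0 - e 1) * (∑ i ∈ Finset.range 1, q i)
          + ∑ k ∈ Finset.Ico 1 (m + 1), (e k - e (k + 1)) * (∑ i ∈ Finset.range (k + 1), q i) := by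
      rw [Finset.range_eq_Ico,
        Finset.sum_eq_sum_Ico_succ_bot (by omega : 0 < m + 1)]
    have key : 2 * Real.sin x ≤ Sstar (2 * m + 1) a x := by
      rw [hSe, hsplit, hlast, one_mul]
      have := hP (m + 1)
      linarith
    refine ⟨by linarith, ⟨fun h => by linarith, fun h => by omega⟩⟩
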